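/- arXiv:2401.14160 — 2 statements merged into one kernel-verified Lean document; each statement's English description precedes it below -/
import Mathlib

section
/- For any joint probability mass function p on the product of finite sets U and V and any partitions {U_s : s ∈ S} of U and {V_t : t ∈ T} of V, the down semantic mutual information is at most the mutual information, which is at most the up semantic mutual information: I_s(Ũ;Ṽ) ≤ I(U;V) ≤ I^s(Ũ;Ṽ). -/
open Finset
open scoped Classical

/-- Probability of a class of the partition induced by a class-index map `c`:
`P(U_s) = Σ_{u ∈ U_s} p u`. -/
noncomputable def Pclass {U S : Type*} [Fintype U] (p : U → ℝ) (c : U → S) (s : S) : ℝ :=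
  ∑ u : U, if c u = s then p u else 0

/-- Semantic entropy `H_s(Ũ) = −Σ_s P(U_s) log₂ P(U_s)`. -/
noncomputable def semEntropy {U S : Type*} [Fintype U] [Fintype S]
    (p : U → ℝ) (c : U → S) : ℝ :=
  -∑ s : S, Pclass p c s * Real.logb 2 (Pclass p c s)

/-- Shannon entropy `H(U) = −Σ_u p(u) log₂ p(u)`. -/
noncomputable def shEntropy {U : Type*} [Fintype U] (p : U → ℝ) : ℝ :=
  -∑ u : U, p u * Real.logb 2 (p u)

/-- Probability of a product class `P(U_s × V_t) = Σ_{u∈U_s} Σ_{v∈V_t} p(u,v)`. -/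
noncomputable def PjointClass {U V S T : Type*} [Fintype U] [Fintype V]
    (p : U → V → ℝ) (cU : U → S) (cV : V → T) (s : S) (t : T) : ℝ :=
  ∑ u : U, ∑ v : V, if cU u = s ∧ cV v = t then p u v else 0

/-- Semantic joint entropy `H_s(Ũ,Ṽ) = −Σ_{s,t} P(U_s × V_t) log₂ P(U_s × V_t)`. -/
noncomputable def semJointEntropy {U V S T : Type*} [Fintype U] [Fintype V] [Fintype S] [Fintype T]
    (p : U → V → ℝ) (cU : U → S) (cV : V → T) : ℝ :=
  -∑ s : S, ∑ t : T, PjointClass p cU cV s t * Real.logb 2 (PjointClass p cU cV s t)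

/-- Shannon joint entropy `H(U,V) = −Σ_{u,v} p(u,v) log₂ p(u,v)`. -/
noncomputable def shJointEntropy {U V : Type*} [Fintype U] [Fintype V] (p : U → V → ℝ) : ℝ :=
  -∑ u : U, ∑ v : V, p u v * Real.logb 2 (p u v)

/-- Marginal `p(u) = Σ_v p(u,v)`. -/
noncomputable def margU {U V : Type*} [Fintype V] (p : U → V → ℝ) (u : U) : ℝ :=
  ∑ v : V, p u v

/-- Marginal `p(v) = Σ_u p(u,v)`. -/
noncomputable def margV {U V : Type*} [Fintype U] (p : U → V → ℝ) (v : V) : ℝ :=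
  ∑ u : U, p u v

/-- `p(U_s, v) = Σ_{u ∈ U_s} p(u,v)`. -/
noncomputable def PclassU {U V S : Type*} [Fintype U]
    (p : U → V → ℝ) (cU : U → S) (s : S) (v : V) : ℝ :=
  ∑ u : U, if cU u = s then p u v else 0

/-- `p(u, V_t) = Σ_{v ∈ V_t} p(u,v)`. -/
noncomputable def PclassV {U V T : Type*} [Fintype V]
    (p : U → V → ℝ) (cV : V → T) (u : U) (t : T) : ℝ :=
  ∑ v : V, if cV v = t then p u v else 0

/-- Semantic conditional entropy
`H_s(Ũ|V) = −Σ_v Σ_s p(U_s, v) log₂ (p(U_s, v)/p(v))` (terms with `p(v) = 0` vanish). -/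
noncomputable def semCondEntropyU {U V S : Type*} [Fintype U] [Fintype V] [Fintype S]
    (p : U → V → ℝ) (cU : U → S) : ℝ :=
  -∑ v : V, ∑ s : S, PclassU p cU s v * Real.logb 2 (PclassU p cU s v / margV p v)

/-- Semantic conditional entropy
`H_s(Ṽ|U) = −Σ_u Σ_t p(u, V_t) log₂ (p(u, V_t)/p(u))` (terms with `p(u) = 0` vanish). -/
noncomputable def semCondEntropyV {U V T : Type*} [Fintype U] [Fintype V] [Fintype T]
    (p : U → V → ℝ) (cV : V → T) : ℝ :=
  -∑ u : U, ∑ t : T, PclassV p cV u t * Real.logb 2 (PclassV p cV u t / margU p u)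

/-- Shannon conditional entropy `H(U|V) = −Σ_{u,v} p(u,v) log₂ (p(u,v)/p(v))`
(terms with `p(v) = 0` vanish). -/
noncomputable def shCondEntropyU {U V : Type*} [Fintype U] [Fintype V] (p : U → V → ℝ) : ℝ :=
  -∑ u : U, ∑ v : V, p u v * Real.logb 2 (p u v / margV p v)

/-- Mutual information `I(U;V) = H(U) + H(V) − H(U,V)`. -/
noncomputable def mutualInfo {U V : Type*} [Fintype U] [Fintype V] (p : U → V → ℝ) : ℝ :=
  shEntropy (margU p) + shEntropy (margV p) - shJointEntropy p

/-- Down semantic mutual information `I_s(Ũ;Ṽ) = H_s(Ũ) + H_s(Ṽ) − H(U,V)`. -/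
noncomputable def downSMI {U V S T : Type*} [Fintype U] [Fintype V] [Fintype S] [Fintype T]
    (p : U → V → ℝ) (cU : U → S) (cV : V → T) : ℝ :=
  semEntropy (margU p) cU + semEntropy (margV p) cV - shJointEntropy p

/-- Up semantic mutual information `I^s(Ũ;Ṽ) = H(U) + H(V) − H_s(Ũ,Ṽ)`. -/
noncomputable def upSMI {U V S T : Type*} [Fintype U] [Fintype V] [Fintype S] [Fintype T]
    (p : U → V → ℝ) (cU : U → S) (cV : V → T) : ℝ :=
  shEntropy (margU p) + shEntropy (margV p) - semJointEntropy p cU cV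

/-!
Merging the atoms of a class into one can only lower the entropy: every atom `u` has
`p u ≤ P(U_{c u})`, so `−p u log p u ≥ −p u log P(U_{c u})`, and summing the right-hand side
fibrewise gives the semantic entropy. Applied to the marginals this makes `H_s(Ũ) ≤ H(U)` and
`H_s(Ṽ) ≤ H(V)`, hence `I_s ≤ I`; applied to the joint law with the product partition it makes
`H_s(Ũ,Ṽ) ≤ H(U,V)`, hence `I ≤ I^s`.
-/

section Coarsening

variable {U S : Type*} [Fintype U]

lemma Pclass_eq_sum_filter (p : U → ℝ) (c : U → S) (s : S) :
    Pclass p c s = ∑ u with c u = s, p u :=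
  (sum_filter _ _).symm

lemma le_Pclass_apply {p : U → ℝ} (hp : ∀ u, 0 ≤ p u) (c : U → S) (u : U) :
    p u ≤ Pclass p c (c u) := by
  rw [Pclass_eq_sum_filter]
  exact single_le_sum (fun u _ => hp u) (by simp)

lemma sum_Pclass_mul_logb_eq [Fintype S] (p : U → ℝ) (c : U → S) :
    ∑ s, Pclass p c s * Real.logb 2 (Pclass p c s) =
      ∑ u, p u * Real.logb 2 (Pclass p c (c u)) := by
  rw [← sum_fiberwise univ c]
  refine sum_congr rfl fun s _ => ?_
  nth_rw 1 [Pclass_eq_sum_filter]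
  rw [sum_mul]
  exact sum_congr rfl fun u hu => by rw [(mem_filter.1 hu).2]

lemma semEntropy_le_shEntropy [Fintype S] {p : U → ℝ} (hp : ∀ u, 0 ≤ p u) (c : U → S) :
    semEntropy p c ≤ shEntropy p := by
  have hlog : ∀ u, p u * Real.logb 2 (p u) ≤ p u * Real.logb 2 (Pclass p c (c u)) := by
    intro u
    rcases (hp u).eq_or_lt with hu | hu
    · simp [← hu]
    · exact mul_le_mul_of_nonneg_left
        (Real.logb_le_logb_of_le one_lt_two hu (le_Pclass_apply hp c u)) hu.le
  rw [semEntropy, shEntropy, sum_Pclass_mul_logb_eq, neg_le_neg_iff]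
  exact sum_le_sum fun u _ => hlog u

end Coarsening

section Joint

variable {U V S T : Type*} [Fintype U] [Fintype V]

lemma PjointClass_eq_Pclass_uncurry (p : U → V → ℝ) (cU : U → S) (cV : V → T) (s : S) (t : T) :
    PjointClass p cU cV s t = Pclass (Function.uncurry p) (Prod.map cU cV) (s, t) := by
  simp [PjointClass, Pclass, Fintype.sum_prod_type, Prod.ext_iff]

lemma semJointEntropy_eq_semEntropy_uncurry [Fintype S] [Fintype T] (p : U → V → ℝ) (cU : U → S) (cV : V → T) :
    semJointEntropy p cU cV = semEntropy (Function.uncurry p) (Prod.map cU cV) := by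
  simp only [semJointEntropy, semEntropy, PjointClass_eq_Pclass_uncurry, Fintype.sum_prod_type]

lemma shJointEntropy_eq_shEntropy_uncurry (p : U → V → ℝ) :
    shJointEntropy p = shEntropy (Function.uncurry p) := by
  simp only [shJointEntropy, shEntropy, Fintype.sum_prod_type, Function.uncurry_apply_pair]

lemma semJointEntropy_le_shJointEntropy [Fintype S] [Fintype T] {p : U → V → ℝ} (hp : ∀ u v, 0 ≤ p u v)
    (cU : U → S) (cV : V → T) :
    semJointEntropy p cU cV ≤ shJointEntropy p := by
  rw [semJointEntropy_eq_semEntropy_uncurry, shJointEntropy_eq_shEntropy_uncurry]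
  exact semEntropy_le_shEntropy (fun uv : U × V => hp uv.1 uv.2) _

end Joint

theorem down_smi_le_mutual_info_le_up_smi_general
    {U V S T : Type*} [Fintype U] [Fintype V] [Fintype S] [Fintype T]
    (p : U → V → ℝ) (hp0 : ∀ u v, 0 ≤ p u v)
    (cU : U → S)
    (cV : V → T) :
    downSMI p cU cV ≤ mutualInfo p ∧ mutualInfo p ≤ upSMI p cU cV := by
  have hU : ∀ u, 0 ≤ margU p u := fun u => sum_nonneg fun v _ => hp0 u v
  have hV : ∀ v, 0 ≤ margV p v := fun v => sum_nonneg fun u _ => hp0 u v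
  constructor
  · have := semEntropy_le_shEntropy hU cU
    have := semEntropy_le_shEntropy hV cV
    rw [downSMI, mutualInfo]
    linarith
  · have := semJointEntropy_le_shJointEntropy hp0 cU cV
    rw [mutualInfo, upSMI]
    linarith

/-- For any joint pmf `p` on `U × V` and any partitions of `U` and `V`
(encoded by surjective class-index maps `cU`, `cV`), the down semantic mutual information is
at most the mutual information, which is at most the up semantic mutual information:
`I_s(Ũ;Ṽ) ≤ I(U;V) ≤ I^s(Ũ;Ṽ)`. -/
theorem down_smi_le_mutual_info_le_up_smi
    {U V S T : Type*} [Fintype U] [Fintype V] [Fintype S] [Fintype T]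
    (p : U → V → ℝ) (hp0 : ∀ u v, 0 ≤ p u v) (hp1 : ∑ u : U, ∑ v : V, p u v = 1)
    (cU : U → S) (hcU : Function.Surjective cU)
    (cV : V → T) (hcV : Function.Surjective cV) :
    downSMI p cU cV ≤ mutualInfo p ∧ mutualInfo p ≤ upSMI p cU cV :=
  down_smi_le_mutual_info_le_up_smi_general p hp0 cU cV
end

section
/- (Semantic source coding theorem, direct part) Let U be a finite set, p a probability mass function on U, and {U_s : s ∈ S} a partition of U with semantic entropy H_s(Ũ); write s(u) for the class index of u. For every R > H_s(Ũ) and every ε > 0, for all sufficiently large n there exist a finite set M with |M| ≤ 2^{nR}, an encoder φ : U^n → M, and a decoder ψ : M → U^n such that, when U_1,...,U_n are i.i.d. with distribution p, the probability that the decoded sequence differs from the source sequence in some semantic symbol, Pr( ∃k ≤ n, s(ψ(φ(U_1,...,U_n))_k) ≠ s(U_k) ), is less than ε. -/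
open Finset
open scoped Classical

section ClassProbability

variable {U S : Type*} [Fintype U] (p : U → ℝ) (c : U → S)

lemma sum_mul_comp_eq_sum_Pclass_mul [Fintype S] (f : S → ℝ) :
    ∑ u, p u * f (c u) = ∑ s, Pclass p c s * f s := by
  simp only [Pclass, sum_mul, ite_mul, zero_mul]
  rw [sum_comm]
  simp

lemma sum_Pclass [Fintype S] : ∑ s, Pclass p c s = ∑ u, p u := by
  simpa using (sum_mul_comp_eq_sum_Pclass_mul p c fun _ => (1 : ℝ)).symm

variable {p}

lemma Pclass_nonneg (hp0 : ∀ u, 0 ≤ p u) (s : S) : 0 ≤ Pclass p c s :=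
  sum_nonneg fun u _ => by split_ifs <;> simp [hp0 u]

lemma le_Pclass (hp0 : ∀ u, 0 ≤ p u) (u : U) : p u ≤ Pclass p c (c u) := by
  unfold Pclass
  simpa using single_le_sum (f := fun v => if c v = c u then p v else 0)
    (fun v _ => by split_ifs <;> simp [hp0 v]) (mem_univ u)

lemma semEntropy_nonneg [Fintype S] (hp0 : ∀ u, 0 ≤ p u) (hp1 : ∑ u, p u = 1) :
    0 ≤ semEntropy p c := by
  have hle : ∀ s, Pclass p c s ≤ 1 := fun s => by
    rw [← hp1, ← sum_Pclass p c]
    exact single_le_sum (fun t _ => Pclass_nonneg c hp0 t) (mem_univ s)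
  rw [semEntropy, neg_nonneg]
  exact sum_nonpos fun s _ => mul_nonpos_of_nonneg_of_nonpos (Pclass_nonneg c hp0 s)
    (Real.logb_nonpos one_lt_two (Pclass_nonneg c hp0 s) (hle s))

end ClassProbability

section ProductWeight

variable {α : Type*} [Fintype α] {n : ℕ} (q : α → ℝ)

lemma sum_prod_mul_prod (F : Fin n → α → ℝ) :
    ∑ y : Fin n → α, (∏ i, q (y i)) * ∏ i, F i (y i) = ∏ i, ∑ s, q s * F i s := by
  simp_rw [← prod_mul_distrib]
  exact (Fintype.prod_sum fun i s => q s * F i s).symm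

variable {q}

lemma sum_prod_eq_one (hq1 : ∑ s, q s = 1) : ∑ y : Fin n → α, ∏ i, q (y i) = 1 := by
  simpa [hq1] using sum_prod_mul_prod (n := n) q fun _ _ => 1

lemma sum_prod_mul_apply_mul_apply (hq1 : ∑ s, q s = 1) {h : α → ℝ}
    (hmean : ∑ s, q s * h s = 0) (k j : Fin n) :
    ∑ y : Fin n → α, (∏ i, q (y i)) * (h (y k) * h (y j))
      = if k = j then ∑ s, q s * h s ^ 2 else 0 := by
  have key := sum_prod_mul_prod q fun i s =>
    (if i = k then h s else 1) * (if i = j then h s else 1)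
  simp only [prod_mul_distrib, prod_ite_eq', mem_univ, if_true] at key
  rw [key]
  split_ifs with hkj
  · subst hkj
    rw [prod_eq_single k (fun i _ hik => by simp [hik, hq1]) (by simp)]
    simp [sq]
  · exact prod_eq_zero (mem_univ k) (by simp [hkj, hmean])

lemma sum_prod_mul_sum_sq (hq1 : ∑ s, q s = 1) {h : α → ℝ} (hmean : ∑ s, q s * h s = 0) :
    ∑ y : Fin n → α, (∏ i, q (y i)) * (∑ k, h (y k)) ^ 2 = n * ∑ s, q s * h s ^ 2 := by
  calc ∑ y : Fin n → α, (∏ i, q (y i)) * (∑ k, h (y k)) ^ 2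
      = ∑ k, ∑ j, ∑ y : Fin n → α, (∏ i, q (y i)) * (h (y k) * h (y j)) := by
        simp_rw [sq, sum_mul_sum, mul_sum]
        rw [sum_comm]
        exact sum_congr rfl fun k _ => sum_comm
    _ = n * ∑ s, q s * h s ^ 2 := by simp [sum_prod_mul_apply_mul_apply hq1 hmean]

end ProductWeight

lemma card_filter_le_inv {ι : Type*} [Fintype ι] {W : ι → ℝ} (hW0 : ∀ i, 0 ≤ W i)
    (hW1 : ∑ i, W i ≤ 1) {t : ℝ} (ht : 0 < t) :
    (#(univ.filter fun i => t ≤ W i) : ℝ) ≤ t⁻¹ := by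
  set A := univ.filter fun i => t ≤ W i
  rw [← one_div, le_div_iff₀ ht]
  calc #A * t = ∑ i ∈ A, t := by rw [sum_const, nsmul_eq_mul]
    _ ≤ ∑ i ∈ A, W i := sum_le_sum fun i hi => (mem_filter.1 hi).2
    _ ≤ ∑ i, W i := sum_le_sum_of_subset_of_nonneg (subset_univ _) fun i _ _ => hW0 i
    _ ≤ 1 := hW1

lemma sum_filter_le_sum_mul_sq_div {ι : Type*} [Fintype ι] {W X : ι → ℝ} {E : ι → Prop}
    [DecidablePred E] (hW0 : ∀ i, 0 ≤ W i) {a : ℝ} (ha : 0 < a)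
    (hE : ∀ i, E i → W i ≠ 0 → a ≤ |X i|) :
    ∑ i ∈ univ.filter E, W i ≤ (∑ i, W i * X i ^ 2) / a ^ 2 := by
  rw [sum_div]
  refine (sum_le_sum fun i hi => ?_).trans
    (sum_le_sum_of_subset_of_nonneg (subset_univ _) fun i _ _ => by positivity [hW0 i])
  rcases eq_or_ne (W i) 0 with h0 | h0
  · simp [h0]
  have hsq : a ^ 2 ≤ X i ^ 2 := by
    simpa [sq_abs] using pow_le_pow_left₀ ha.le (hE i (mem_filter.1 hi).2 h0) 2
  rw [le_div_iff₀ (by positivity)]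
  exact mul_le_mul_of_nonneg_left hsq (hW0 i)

lemma lt_sum_sub_of_prod_lt_rpow {α : Type*} {n : ℕ} {q : α → ℝ} {y : Fin n → α}
    (hy : ∀ k, 0 < q (y k)) {μ δ : ℝ} (hlt : ∏ k, q (y k) < (2 : ℝ) ^ (-(n * (μ + δ)))) :
    n * δ < ∑ k, (-Real.logb 2 (q (y k)) - μ) := by
  have hlog : ∑ k, Real.logb 2 (q (y k)) < -(n * (μ + δ)) := calc
    ∑ k, Real.logb 2 (q (y k)) = Real.logb 2 (∏ k, q (y k)) :=
      (Real.logb_prod _ _ fun k _ => (hy k).ne').symm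
    _ < Real.logb 2 (2 ^ (-(n * (μ + δ)))) :=
      Real.logb_lt_logb one_lt_two (prod_pos fun k _ => hy k) hlt
    _ = -(n * (μ + δ)) := Real.logb_rpow two_pos (by norm_num)
  simp only [sum_sub_distrib, sum_neg_distrib, sum_const, card_univ, Fintype.card_fin, nsmul_eq_mul]
  linarith

lemma exists_encoder_decoder {X Y : Type*} [Nonempty X] (f : X → Y) (A : Finset Y) :
    ∃ (φ : X → Fin (#A + 1)) (ψ : Fin (#A + 1) → X), ∀ x, f x ∈ A → f (ψ (φ x)) = f x := by
  let e := A.equivFin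
  refine ⟨fun x => if hx : f x ∈ A then (e ⟨f x, hx⟩).castSucc else Fin.last _,
    Fin.lastCases (Classical.arbitrary X) fun i => Function.invFun f (e.symm i), fun x hx => ?_⟩
  simp only [dif_pos hx, Fin.lastCases_castSucc, Equiv.symm_apply_apply]
  exact Function.invFun_eq ⟨x, rfl⟩

lemma add_one_le_two_rpow_add {a x y : ℝ} (ha : a ≤ 2 ^ x) (hx : 0 ≤ x) (hy : 1 ≤ y) :
    a + 1 ≤ 2 ^ (x + y) := by
  have h1 : (1 : ℝ) ≤ 2 ^ x := Real.one_le_rpow one_le_two hx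
  have h2 : (2 : ℝ) ≤ 2 ^ y := by
    simpa using Real.rpow_le_rpow_of_exponent_le one_le_two hy
  rw [Real.rpow_add two_pos]
  nlinarith

section Typical

variable {U S : Type*} [Fintype U] [Fintype S]

noncomputable def semTypicalSet (p : U → ℝ) (c : U → S) (n : ℕ) (δ : ℝ) : Finset (Fin n → S) :=
  univ.filter fun y => (2 : ℝ) ^ (-(n * (semEntropy p c + δ))) ≤ ∏ k, Pclass p c (y k)

lemma card_semTypicalSet_le {p : U → ℝ} (hp0 : ∀ u, 0 ≤ p u) (hp1 : ∑ u, p u = 1) (c : U → S)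
    (n : ℕ) (δ : ℝ) : (#(semTypicalSet p c n δ) : ℝ) ≤ 2 ^ (n * (semEntropy p c + δ)) := by
  have h := card_filter_le_inv
    (fun y : Fin n → S => prod_nonneg fun k _ => Pclass_nonneg c hp0 (y k))
    (sum_prod_eq_one (by rw [sum_Pclass, hp1])).le
    (Real.rpow_pos_of_pos two_pos (-(n * (semEntropy p c + δ))))
  exact h.trans_eq (by rw [Real.rpow_neg zero_le_two, inv_inv])

lemma sum_prod_le_of_notMem_semTypicalSet {p : U → ℝ} (hp0 : ∀ u, 0 ≤ p u)
    (hp1 : ∑ u, p u = 1) (c : U → S) {n : ℕ} (hn : 0 < n) {δ : ℝ} (hδ : 0 < δ)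
    {E : (Fin n → U) → Prop} [DecidablePred E]
    (hE : ∀ x, E x → (fun k => c (x k)) ∉ semTypicalSet p c n δ) :
    ∑ x ∈ univ.filter E, ∏ k, p (x k)
      ≤ (∑ u, p u * (-Real.logb 2 (Pclass p c (c u)) - semEntropy p c) ^ 2) / (n * δ ^ 2) := by
  set H : U → ℝ := fun u => -Real.logb 2 (Pclass p c (c u)) - semEntropy p c
  have hH : ∑ u, p u * H u = 0 := by
    simp only [H, mul_sub, sum_sub_distrib, ← sum_mul, hp1, one_mul,
      sum_mul_comp_eq_sum_Pclass_mul p c fun s => -Real.logb 2 (Pclass p c s)]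
    simp [semEntropy]
  have hnδ : (0 : ℝ) < n * δ := by positivity
  calc ∑ x ∈ univ.filter E, ∏ k, p (x k)
      ≤ (∑ x : Fin n → U, (∏ k, p (x k)) * (∑ k, H (x k)) ^ 2) / (n * δ) ^ 2 := by
        refine sum_filter_le_sum_mul_sq_div
          (fun x : Fin n → U => prod_nonneg fun k _ => hp0 (x k)) hnδ fun x hx hx0 => ?_
        -- `p(x) ≠ 0` makes every class probability positive, so the logarithms are not junk.
        have hpos : ∀ k, 0 < Pclass p c (c (x k)) := fun k =>
          ((hp0 _).lt_of_ne (Ne.symm fun h => hx0 (prod_eq_zero (mem_univ k) h))).trans_le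
            (le_Pclass c hp0 _)
        have hlt := hE x hx
        simp only [semTypicalSet, mem_filter, mem_univ, true_and, not_le] at hlt
        exact (lt_sum_sub_of_prod_lt_rpow hpos hlt).le.trans (le_abs_self _)
    _ = (∑ u, p u * H u ^ 2) / (n * δ ^ 2) := by
        rw [sum_prod_mul_sum_sq hp1 hH]
        field_simp

end Typical

theorem semantic_source_coding_direct_general
    {U S : Type*} [Fintype U] [Fintype S]
    (p : U → ℝ) (hp0 : ∀ u, 0 ≤ p u) (hp1 : ∑ u : U, p u = 1)
    (c : U → S)
    (R : ℝ) (hR : semEntropy p c < R) (ε : ℝ) (hε : 0 < ε) :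
    ∃ N : ℕ, ∀ n ≥ N,
      ∃ (m : ℕ) (φ : (Fin n → U) → Fin m) (ψ : Fin m → Fin n → U),
        (m : ℝ) ≤ 2 ^ ((n : ℝ) * R) ∧
        (∑ x ∈ Finset.univ.filter (fun x : Fin n → U =>
              ∃ k : Fin n, c (ψ (φ x) k) ≠ c (x k)),
            ∏ k : Fin n, p (x k)) < ε := by
  have : Nonempty U := by
    by_contra h
    simp [not_nonempty_iff.1 h] at hp1
  set V := ∑ u, p u * (-Real.logb 2 (Pclass p c (c u)) - semEntropy p c) ^ 2
  set δ := (R - semEntropy p c) / 2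
  have hδ : 0 < δ := half_pos (sub_pos.2 hR)
  obtain ⟨N, hN⟩ := exists_nat_gt (max (1 / δ) (V / (ε * δ ^ 2)))
  refine ⟨N, fun n hn => ?_⟩
  replace hN : max (1 / δ) (V / (ε * δ ^ 2)) < n := hN.trans_le (Nat.cast_le.2 hn)
  have hnpos : (0 : ℝ) < n := lt_of_le_of_lt (by positivity) ((le_max_left _ _).trans_lt hN)
  obtain ⟨φ, ψ, hφψ⟩ :=
    exists_encoder_decoder (fun x : Fin n → U => fun k => c (x k)) (semTypicalSet p c n δ)
  refine ⟨_, φ, ψ, ?_, ?_⟩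
  · calc ((#(semTypicalSet p c n δ) + 1 : ℕ) : ℝ)
        ≤ 2 ^ (n * (semEntropy p c + δ) + n * δ) := by
          push_cast
          exact add_one_le_two_rpow_add (card_semTypicalSet_le hp0 hp1 c n δ)
            (by positivity [semEntropy_nonneg c hp0 hp1])
            ((div_le_iff₀ hδ).1 ((le_max_left _ _).trans hN.le))
      _ = 2 ^ ((n : ℝ) * R) := by congr 1; simp only [δ]; ring
  · calc _ ≤ V / (n * δ ^ 2) :=
          sum_prod_le_of_notMem_semTypicalSet hp0 hp1 c (Nat.cast_pos.1 hnpos) hδ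
            fun x ⟨k, hk⟩ hx => hk (congrFun (hφψ x hx) k)
      _ < ε := by
          have hV := (div_lt_iff₀ (by positivity)).1 ((le_max_right _ _).trans_lt hN)
          rw [div_lt_iff₀ (by positivity)]
          linarith

/-- Semantic source coding theorem, direct part: Let `p` be a pmf on a finite
set `U` and let a partition of `U` be encoded by a surjective class-index map `c : U → S`.
For every rate `R > H_s(Ũ)` and every `ε > 0`, for all sufficiently large `n` there exist a
message set `Fin m` with `m ≤ 2^{nR}`, an encoder `φ : U^n → Fin m` and a decoder
`ψ : Fin m → U^n` such that, for i.i.d. `U_1,…,U_n ~ p`, the probability that the decoded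
sequence differs from the source sequence in some semantic symbol is less than `ε`. -/
theorem semantic_source_coding_direct
    {U S : Type*} [Fintype U] [Fintype S]
    (p : U → ℝ) (hp0 : ∀ u, 0 ≤ p u) (hp1 : ∑ u : U, p u = 1)
    (c : U → S) (hc : Function.Surjective c)
    (R : ℝ) (hR : semEntropy p c < R) (ε : ℝ) (hε : 0 < ε) :
    ∃ N : ℕ, ∀ n ≥ N,
      ∃ (m : ℕ) (φ : (Fin n → U) → Fin m) (ψ : Fin m → Fin n → U),
        (m : ℝ) ≤ 2 ^ ((n : ℝ) * R) ∧
        (∑ x ∈ Finset.univ.filter (fun x : Fin n → U =>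
              ∃ k : Fin n, c (ψ (φ x) k) ≠ c (x k)),
            ∏ k : Fin n, p (x k)) < ε :=
  semantic_source_coding_direct_general p hp0 hp1 c R hR ε hε
end
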